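/- Let E be a reflexive real Banach space and T : E → 2^{E*} maximal monotone. Then R(T + λJ) = E* for every λ > 0, where (T + λJ)(x) = {x* + λz* : x* ∈ T(x), z* ∈ J(x)}. -/

import Mathlib

/-!
Replacing `T` by `x ↦ λ⁻¹ (T x - w')` reduces the claim to finding `x` with `-J x ∩ T x ≠ ∅`.
Maximality gives `φ_T (x, x') ≥ x' x ≥ -(‖x‖² + ‖x'‖²)/2` for the Fitzpatrick function `φ_T`, so
Hahn–Banach separates the epigraph of `φ_T` from the strict hypograph of `-(‖x‖² + ‖x'‖²)/2` by an
affine function `(x, x') ↦ y' x + x' y - v` on `E × E*` (reflexivity gives the form of `x' ↦ x' y`).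
Conjugating the quadratic gives `‖y'‖²/2 + ‖y‖²/2 ≤ v`, which makes `(-y, -y')` monotonically
related to the graph of `T`, hence on it, with `y' ∈ J (-y)`.
-/

open NormedSpace Set

section NormedSpace

variable {F : Type*} [NormedAddCommGroup F] [NormedSpace ℝ F]

theorem convexOn_univ_sq_norm_div_two : ConvexOn ℝ univ (fun x : F => ‖x‖ ^ 2 / 2) := by
  simpa [div_eq_inv_mul] using
    (convexOn_univ_norm.pow (fun x _ => norm_nonneg x) 2).smul (c := (2 : ℝ)⁻¹) (by norm_num)

theorem neg_opNorm_mul_norm_le (f : StrongDual ℝ F) (x : F) : -(‖f‖ * ‖x‖) ≤ f x :=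
  (abs_le.mp (f.le_opNorm x)).1

theorem sq_opNorm_div_two_le (f : StrongDual ℝ F) {c : ℝ} (h : ∀ x, f x ≤ ‖x‖ ^ 2 / 2 + c) :
    ‖f‖ ^ 2 / 2 ≤ c := by
  have hc : 0 ≤ c := by simpa using h 0
  -- Test `h` at `x = (f u) • u`.
  have hunit : ∀ u : F, ‖u‖ = 1 → ‖f u‖ ≤ √(2 * c) := fun u hu => by
    have := h (f u • u)
    rw [map_smul, smul_eq_mul, norm_smul, hu, Real.norm_eq_abs, mul_one, sq_abs] at this
    exact Real.abs_le_sqrt (by nlinarith)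
  have := sq_le_sq' (by linarith [norm_nonneg f, Real.sqrt_nonneg (2 * c)])
    (ContinuousLinearMap.opNorm_le_of_unit_norm (Real.sqrt_nonneg _) hunit)
  rw [Real.sq_sqrt (by positivity)] at this
  linarith

theorem sq_norm_div_two_add_sq_norm_div_two_le {y' : StrongDual ℝ F} {y : F} {v : ℝ}
    (h : ∀ (x : F) (x' : StrongDual ℝ F), y' x + x' y ≤ ‖x‖ ^ 2 / 2 + ‖x'‖ ^ 2 / 2 + v) :
    ‖y'‖ ^ 2 / 2 + ‖y‖ ^ 2 / 2 ≤ v := by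
  have hy' : ∀ x' : StrongDual ℝ F, ‖y'‖ ^ 2 / 2 ≤ ‖x'‖ ^ 2 / 2 + v - x' y := fun x' =>
    sq_opNorm_div_two_le y' fun x => by linarith [h x x']
  have hy := sq_opNorm_div_two_le (inclusionInDoubleDual ℝ F y)
    (c := v - ‖y'‖ ^ 2 / 2) fun x' => by
      rw [dual_def]
      linarith [hy' x']
  rw [show ‖inclusionInDoubleDual ℝ F y‖ = ‖y‖ from (inclusionInDoubleDualLi ℝ).norm_map y] at hy
  linarith

theorem exists_affine_between_of_forall_neg_le {q : F → ℝ} (hq : ConvexOn ℝ univ q)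
    (hqc : Continuous q) {B : Set (F × ℝ)} (hB : Convex ℝ B) (hBne : B.Nonempty)
    (hqB : ∀ p ∈ B, -q p.1 ≤ p.2) :
    ∃ (L : StrongDual ℝ F) (v : ℝ), (∀ w, L w ≤ q w + v) ∧ ∀ p ∈ B, v ≤ L p.1 + p.2 := by
  set C : Set (F × ℝ) := {p | p.1 ∈ univ ∧ p.2 < (-q) p.1}
  have hC : Convex ℝ C := hq.neg.convex_strict_hypograph
  have hCo : IsOpen C := by
    simpa [C] using isOpen_lt continuous_snd (hqc.comp continuous_fst).neg
  have hCB : Disjoint C B := Set.disjoint_left.mpr fun p hpC hpB => (hqB p hpB).not_gt hpC.2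
  obtain ⟨f, u, hfC, hfB⟩ := geometric_hahn_banach_open hC hCo hB hCB
  set L₀ := f.comp (ContinuousLinearMap.inl ℝ F ℝ)
  set c := f (0, 1)
  have hf : ∀ p : F × ℝ, f p = L₀ p.1 + c * p.2 := fun p =>
    calc f p = f ((p.1, 0) + p.2 • ((0 : F), (1 : ℝ))) := by congr 1; ext <;> simp
      _ = L₀ p.1 + c * p.2 := by rw [map_add, map_smul, smul_eq_mul, mul_comm]; rfl
  have hfC' : ∀ w t, t < -q w → L₀ w + c * t < u := fun w t ht => by
    simpa [hf] using hfC (w, t) ⟨mem_univ _, ht⟩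
  -- Going down vertically from a point of `B` into `C` decreases `f`, so `c > 0`.
  have hc : 0 < c := by
    obtain ⟨b, hb⟩ := hBne
    have h₁ := hfC' b.1 (min b.2 (-q b.1) - 1) (by linarith [min_le_right b.2 (-q b.1)])
    have h₂ := hf b ▸ hfB b hb
    nlinarith [min_le_left b.2 (-q b.1)]
  refine ⟨c⁻¹ • L₀, c⁻¹ * u, fun w => ?_, fun p hp => ?_⟩
  · have : -q w ≤ c⁻¹ * u - c⁻¹ * L₀ w := le_of_forall_lt fun t ht => by
      rw [← mul_sub, lt_inv_mul_iff₀ hc]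
      linarith [hfC' w t ht]
    simp only [smul_apply, smul_eq_mul]
    linarith
  · have := hf p ▸ hfB p hp
    rw [smul_apply, smul_eq_mul, inv_mul_le_iff₀ hc, mul_add,
      mul_inv_cancel_left₀ hc.ne']
    exact this

end NormedSpace

section Operators

variable {E : Type*} [NormedAddCommGroup E] [NormedSpace ℝ E]

def IsMonotoneOperator (T : E → Set (StrongDual ℝ E)) : Prop :=
  ∀ x y x' y', x' ∈ T x → y' ∈ T y → 0 ≤ (x' - y') (x - y)

/-- Every point monotonically related to the graph of `T` lies on it; together with
`IsMonotoneOperator T` this is maximal monotonicity. -/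
def IsMaximalOperator (T : E → Set (StrongDual ℝ E)) : Prop :=
  ∀ x x', (∀ y y', y' ∈ T y → 0 ≤ (x' - y') (x - y)) → x' ∈ T x

def dualityMap (x : E) : Set (StrongDual ℝ E) := {z' | z' x = ‖z'‖ * ‖x‖ ∧ ‖z'‖ = ‖x‖}

/-- The epigraph of the Fitzpatrick function
`φ_T (x, x') = sup {s' x + x' s - s' s | s' ∈ T s}`. -/
def fitzpatrickEpigraph (T : E → Set (StrongDual ℝ E)) : Set ((E × StrongDual ℝ E) × ℝ) :=
  {p | ∀ s s', s' ∈ T s → s' p.1.1 + p.1.2 s - s' s ≤ p.2}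

theorem convex_fitzpatrickEpigraph (T : E → Set (StrongDual ℝ E)) :
    Convex ℝ (fitzpatrickEpigraph T) := by
  intro p hp r hr a b ha hb hab s s' hs
  have hss : a * s' s + b * s' s = s' s := by rw [← add_mul, hab, one_mul]
  simp only [Prod.fst_add, Prod.snd_add, Prod.smul_fst, Prod.smul_snd, smul_eq_mul, map_add,
    map_smul, add_apply, smul_apply]
  nlinarith [hp s s' hs, hr s s' hs]

variable {T : E → Set (StrongDual ℝ E)}

theorem IsMonotoneOperator.mem_fitzpatrickEpigraph (hT : IsMonotoneOperator T) {s : E}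
    {s' : StrongDual ℝ E} (hs : s' ∈ T s) : ((s, s'), s' s) ∈ fitzpatrickEpigraph T :=
  fun r r' hr => by
    have := hT s r s' r' hs hr
    simp only [sub_apply, map_sub] at this
    linarith

theorem IsMaximalOperator.exists_apply_le (hT : IsMaximalOperator T) (x : E)
    (x' : StrongDual ℝ E) : ∃ s s', s' ∈ T s ∧ x' x ≤ s' x + x' s - s' s := by
  by_cases hrel : ∀ s s', s' ∈ T s → 0 ≤ (x' - s') (x - s)
  · exact ⟨x, x', hT x x' hrel, by simp⟩
  · push Not at hrel
    obtain ⟨s, s', hs, hlt⟩ := hrel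
    simp only [sub_apply, map_sub] at hlt
    exact ⟨s, s', hs, by linarith⟩

theorem IsMaximalOperator.neg_le_of_mem_fitzpatrickEpigraph (hT : IsMaximalOperator T)
    {p : (E × StrongDual ℝ E) × ℝ} (hp : p ∈ fitzpatrickEpigraph T) :
    -(‖p.1.1‖ ^ 2 / 2 + ‖p.1.2‖ ^ 2 / 2) ≤ p.2 := by
  obtain ⟨s, s', hs, hle⟩ := hT.exists_apply_le p.1.1 p.1.2
  nlinarith [hp s s' hs, neg_opNorm_mul_norm_le p.1.2 p.1.1, sq_nonneg (‖p.1.1‖ - ‖p.1.2‖)]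

theorem IsMaximalOperator.nonempty (hT : IsMaximalOperator T) : ∃ s s', s' ∈ T s := by
  by_contra! h
  exact h 0 0 (hT 0 0 fun y y' hy => absurd hy (h y y'))

/-- `(-y, -y')` is monotonically related to the graph since `-y' y ≥ -‖y'‖ ‖y‖ ≥ -v`; testing `hG`
at that point then forces equality in `-y' y ≤ ‖y'‖ ‖y‖ ≤ ‖y'‖²/2 + ‖y‖²/2`. -/
theorem IsMaximalOperator.neg_mem_and_mem_dualityMap (hT : IsMaximalOperator T)
    {y : E} {y' : StrongDual ℝ E} {v : ℝ} (hv : ‖y'‖ ^ 2 / 2 + ‖y‖ ^ 2 / 2 ≤ v)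
    (hG : ∀ s s', s' ∈ T s → v ≤ y' s + s' y + s' s) :
    -y' ∈ T (-y) ∧ y' ∈ dualityMap (-y) := by
  have hyy := neg_opNorm_mul_norm_le y' y
  have hmem : -y' ∈ T (-y) := hT _ _ fun s s' hs => by
    have hexp : (-y' - s') (-y - s) = y' y + (y' s + s' y + s' s) := by
      simp only [sub_apply, neg_apply, map_sub, map_neg]
      ring
    rw [hexp]
    nlinarith [hG s s' hs, sq_nonneg (‖y‖ - ‖y'‖)]
  have hval : v ≤ -y' y := by
    simpa [map_neg, neg_apply] using hG _ _ hmem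
  have hnorm : ‖y'‖ = ‖y‖ := by nlinarith [sq_nonneg (‖y‖ - ‖y'‖)]
  refine ⟨hmem, ?_, by rw [norm_neg, hnorm]⟩
  rw [map_neg, norm_neg]
  nlinarith

theorem exists_neg_mem_dualityMap_of_surjective_inclusionInDoubleDual
    (hrefl : Function.Surjective (inclusionInDoubleDual ℝ E))
    (hmono : IsMonotoneOperator T) (hmax : IsMaximalOperator T) :
    ∃ x z', -z' ∈ T x ∧ z' ∈ dualityMap x := by
  have hq : ConvexOn ℝ univ (fun w : E × StrongDual ℝ E => ‖w.1‖ ^ 2 / 2 + ‖w.2‖ ^ 2 / 2) :=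
    (convexOn_univ_sq_norm_div_two.comp_linearMap (LinearMap.fst ℝ _ _)).add
      (convexOn_univ_sq_norm_div_two.comp_linearMap (LinearMap.snd ℝ _ _))
  obtain ⟨s₀, s₀', hs₀⟩ := hmax.nonempty
  obtain ⟨L, v, hL, hLB⟩ := exists_affine_between_of_forall_neg_le hq (by fun_prop)
    (convex_fitzpatrickEpigraph T) ⟨_, hmono.mem_fitzpatrickEpigraph hs₀⟩
    fun p hp => hmax.neg_le_of_mem_fitzpatrickEpigraph hp
  set y' := L.comp (ContinuousLinearMap.inl ℝ E (StrongDual ℝ E))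
  obtain ⟨y, hy⟩ := hrefl (L.comp (ContinuousLinearMap.inr ℝ E (StrongDual ℝ E)))
  have hLy : ∀ x x', L (x, x') = y' x + x' y := fun x x' => by
    rw [← L.comp_inl_add_comp_inr (x, x'), ← hy, dual_def]
  have hv := sq_norm_div_two_add_sq_norm_div_two_le (y' := y') (y := y) (v := v) fun x x' => by
    simpa [hLy] using hL (x, x')
  refine ⟨-y, y', hmax.neg_mem_and_mem_dualityMap hv fun s s' hs => ?_⟩
  simpa [hLy, add_assoc] using hLB _ (hmono.mem_fitzpatrickEpigraph hs)

theorem IsMonotoneOperator.preimage_smul_add (hT : IsMonotoneOperator T) {c : ℝ} (hc : 0 < c)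
    (w' : StrongDual ℝ E) : IsMonotoneOperator fun x => (fun a => c • a + w') ⁻¹' T x :=
  fun x y x' y' hx hy => by
    have := hT x y _ _ hx hy
    rw [add_sub_add_right_eq_sub] at this
    refine (mul_nonneg_iff_of_pos_left hc).mp ?_
    simpa [mul_sub] using this

theorem IsMaximalOperator.preimage_smul_add (hT : IsMaximalOperator T) {c : ℝ} (hc : 0 < c)
    (w' : StrongDual ℝ E) : IsMaximalOperator fun x => (fun a => c • a + w') ⁻¹' T x :=
  fun x x' hx => hT x _ fun y b hb => by
    have := hx y (c⁻¹ • (b - w')) (by simpa [smul_inv_smul₀ hc.ne'] using hb)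
    have hid : c • x' + w' - b = c • (x' - c⁻¹ • (b - w')) := by
      rw [smul_sub, smul_inv_smul₀ hc.ne']
      abel
    rw [hid, smul_apply, smul_eq_mul]
    exact mul_nonneg hc.le this

end Operators

theorem range_add_duality_eq_univ_of_reflexive_general
    {E : Type*} [NormedAddCommGroup E] [NormedSpace ℝ E]
    (hrefl : Function.Surjective (inclusionInDoubleDual ℝ E))
    (T : E → Set (StrongDual ℝ E))
    (hmono : ∀ x y x' y', x' ∈ T x → y' ∈ T y → 0 ≤ (x' - y') (x - y))
    (hmax : ∀ x x', (∀ y y', y' ∈ T y → 0 ≤ (x' - y') (x - y)) → x' ∈ T x)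
    (lam : ℝ) (hlam : 0 < lam) :
    ∀ w' : StrongDual ℝ E, ∃ (x : E) (x' z' : StrongDual ℝ E),
      x' ∈ T x ∧ (z' x = ‖z'‖ * ‖x‖ ∧ ‖z'‖ = ‖x‖) ∧ w' = x' + lam • z' := by
  intro w'
  obtain ⟨x, z', hz'T, hz'J⟩ := exists_neg_mem_dualityMap_of_surjective_inclusionInDoubleDual hrefl
    (IsMonotoneOperator.preimage_smul_add hmono hlam w')
    (IsMaximalOperator.preimage_smul_add hmax hlam w')
  refine ⟨x, lam • -z' + w', z', hz'T, hz'J, ?_⟩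
  rw [smul_neg]
  abel

/-- If `E` is a reflexive real Banach space and `T : E → 2^{E*}` is maximal monotone, then
`R(T + λJ) = E*` for every `λ > 0`, where `J` is the duality mapping. -/
theorem range_add_duality_eq_univ_of_reflexive
    {E : Type*} [NormedAddCommGroup E] [NormedSpace ℝ E] [CompleteSpace E]
    (hrefl : Function.Surjective (inclusionInDoubleDual ℝ E))
    (T : E → Set (StrongDual ℝ E))
    (hmono : ∀ x y x' y', x' ∈ T x → y' ∈ T y → 0 ≤ (x' - y') (x - y))
    (hmax : ∀ x x', (∀ y y', y' ∈ T y → 0 ≤ (x' - y') (x - y)) → x' ∈ T x)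
    (lam : ℝ) (hlam : 0 < lam) :
    ∀ w' : StrongDual ℝ E, ∃ (x : E) (x' z' : StrongDual ℝ E),
      x' ∈ T x ∧ (z' x = ‖z'‖ * ‖x‖ ∧ ‖z'‖ = ‖x‖) ∧ w' = x' + lam • z' :=
  range_add_duality_eq_univ_of_reflexive_general hrefl T hmono hmax lam hlam
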